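/- On the Tchebyshev hypergroup (generated by Chebyshev polynomials of the first kind T_n), every generalized moment sequence of rank 2 with |α| ≤ 2 has the form: φ_{(0,0)}(n) = T_n(λ), φ_{(1,0)}(n) = c_{10} T_n'(λ), φ_{(0,1)}(n) = c_{01} T_n'(λ), φ_{(1,1)}(n) = c_{10}c_{01} T_n''(λ) + c_{11} T_n'(λ), φ_{(2,0)}(n) = c_{10}² T_n''(λ) + c_{20} T_n'(λ), φ_{(0,2)}(n) = c_{01}² T_n''(λ) + c_{02} T_n'(λ), where λ = φ_{(0,0)}(1) and c_{10}, c_{01}, c_{11}, c_{20}, c_{02} are the complex constants φ_{(1,0)}(1), φ_{(0,1)}(1), φ_{(1,1)}(1), φ_{(2,0)}(1), φ_{(0,2)}(1). -/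

import Mathlib

/-!
Taking `n = 1` in the moment equation gives the three-term recurrence
`φ_α(m + 2) + φ_α(m) = 2 ∑_{β ≤ α} (α choose β) φ_β(m + 1) φ_{α-β}(1)`: the recurrence of
`T_m(λ)`, perturbed by terms of lower order in `α`. Differentiating
`T_{m+2} + T_m = 2 X T_{m+1}` once and twice shows that the claimed closed forms satisfy the same
recurrences. Both sides agree at `m = 1` trivially and at `m = 0` by the moment equation at
`m = n = 0`, so induction on `m`, order by order in `α`, gives the result.
-/

open Polynomial Polynomial.Chebyshev

noncomputable def mchoose {r : ℕ} (α β : Fin r → ℕ) : ℕ := ∏ i, Nat.choose (α i) (β i)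

namespace Polynomial.Chebyshev

variable {R : Type*} [CommRing R]

theorem T_add_two_add_T (n : ℤ) : T R (n + 2) + T R n = 2 * X * T R (n + 1) := by
  rw [T_add_two]; ring

theorem derivative_T_add_two_add_derivative_T (n : ℤ) :
    derivative (T R (n + 2)) + derivative (T R n) =
      2 * (X * derivative (T R (n + 1)) + T R (n + 1)) := by
  rw [← derivative_add, T_add_two_add_T]; simp [derivative_mul]; ring

theorem derivative_derivative_T_add_two_add_derivative_derivative_T (n : ℤ) :
    derivative (derivative (T R (n + 2))) + derivative (derivative (T R n)) =
      2 * (X * derivative (derivative (T R (n + 1))) + 2 * derivative (T R (n + 1))) := by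
  rw [← derivative_add, derivative_T_add_two_add_derivative_T]; simp [derivative_mul]; ring

theorem eq_eval_T_of_add_two {u : ℕ → R} (h0 : u 0 = 1)
    (h : ∀ n, u (n + 2) + u n = 2 * (u 1 * u (n + 1))) (n : ℕ) :
    u n = eval (u 1) (T R n) := by
  induction n using Nat.twoStepInduction with
  | zero => simp [h0]
  | one => simp
  | more n ihzero ih₁ =>
    have hT := congrArg (eval (u 1)) (T_add_two_add_T (R := R) n)
    push_cast at hT ih₁ ⊢
    simp only [eval_add, eval_mul, eval_ofNat, eval_X] at hT
    linear_combination h n + 2 * u 1 * ih₁ - ihzero - hT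

theorem eq_eval_derivative_T_of_add_two {u : ℕ → R} (x a : R) (h0 : u 0 = 0)
    (h : ∀ n, u (n + 2) + u n = 2 * (x * u (n + 1) + u 1 * eval x (T R (n + 1)) +
      2 * a * eval x (derivative (T R (n + 1))))) (n : ℕ) :
    u n = a * eval x (derivative (derivative (T R n))) + u 1 * eval x (derivative (T R n)) := by
  induction n using Nat.twoStepInduction with
  | zero => simp [h0]
  | one => simp
  | more n ihzero ih₁ =>
    have hD := congrArg (eval x) (derivative_T_add_two_add_derivative_T (R := R) n)
    have hD2 := congrArg (eval x)
      (derivative_derivative_T_add_two_add_derivative_derivative_T (R := R) n)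
    push_cast at hD hD2 ih₁ h ⊢
    simp only [eval_add, eval_mul, eval_ofNat, eval_X] at hD hD2
    linear_combination h n + 2 * x * ih₁ - ihzero - a * hD2 - u 1 * hD

theorem eq_mul_eval_derivative_T_of_add_two {u : ℕ → R} (x : R) (h0 : u 0 = 0)
    (h : ∀ n, u (n + 2) + u n = 2 * (x * u (n + 1) + u 1 * eval x (T R (n + 1)))) (n : ℕ) :
    u n = u 1 * eval x (derivative (T R n)) := by
  simpa using eq_eval_derivative_T_of_add_two x 0 h0 (by simpa using h) n

end Polynomial.Chebyshev

open Finset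

theorem Finset.sum_Iic_fin_two {M : Type*} [AddCommMonoid M] (f : (Fin 2 → ℕ) → M) (a b : ℕ) :
    ∑ β ∈ Iic ![a, b], f β = ∑ i ∈ range (a + 1), ∑ j ∈ range (b + 1), f ![i, j] := by
  have eta (β : Fin 2 → ℕ) : ![β 0, β 1] = β := FinVec.etaExpand_eq β
  rw [← sum_product' (f := fun i j => f ![i, j])]
  refine sum_nbij' (fun β => (β 0, β 1)) (fun p => ![p.1, p.2]) ?_ ?_ ?_ ?_ ?_ <;>
    simp [Pi.le_def, Fin.forall_fin_two, eta]

def IsChebyshevMomentFamily {r : ℕ} (N : ℕ) (φ : (Fin r → ℕ) → ℕ → ℂ) : Prop :=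
  ∀ α : Fin r → ℕ, (∑ i, α i) ≤ N → ∀ m n : ℕ,
    (1 / 2 : ℂ) * φ α (m + n) + (1 / 2 : ℂ) * φ α (Nat.dist m n) =
      ∑ β ∈ Iic α, (mchoose α β : ℂ) * φ β m * φ (α - β) n

namespace IsChebyshevMomentFamily

variable {φ : (Fin 2 → ℕ) → ℕ → ℂ}

theorem apply_add_add_apply_dist (hφ : IsChebyshevMomentFamily 2 φ) {a b : ℕ} (hab : a + b ≤ 2)
    (m n : ℕ) :
    φ ![a, b] (m + n) + φ ![a, b] (Nat.dist m n) = 2 * ∑ i ∈ range (a + 1), ∑ j ∈ range (b + 1),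
      (a.choose i * b.choose j : ℂ) * φ ![i, j] m * φ ![a - i, b - j] n := by
  have h := hφ ![a, b] (by simpa using hab) m n
  simp only [sum_Iic_fin_two, mchoose, Fin.prod_univ_two, Matrix.cons_sub_cons,
    Matrix.empty_sub_empty, Matrix.cons_val_zero, Matrix.cons_val_one, Nat.cast_mul] at h
  linear_combination 2 * h

theorem apply_zero_eq_sum (hφ : IsChebyshevMomentFamily 2 φ) {a b : ℕ} (hab : a + b ≤ 2) :
    φ ![a, b] 0 = ∑ i ∈ range (a + 1), ∑ j ∈ range (b + 1),
      (a.choose i * b.choose j : ℂ) * φ ![i, j] 0 * φ ![a - i, b - j] 0 := by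
  have h := hφ.apply_add_add_apply_dist hab 0 0
  rw [Nat.dist_self] at h
  linear_combination (1 / 2 : ℂ) * h

theorem apply_add_two_add_apply (hφ : IsChebyshevMomentFamily 2 φ) {a b : ℕ} (hab : a + b ≤ 2)
    (n : ℕ) :
    φ ![a, b] (n + 2) + φ ![a, b] n = 2 * ∑ i ∈ range (a + 1), ∑ j ∈ range (b + 1),
      (a.choose i * b.choose j : ℂ) * φ ![i, j] (n + 1) * φ ![a - i, b - j] 1 := by
  simpa [Nat.dist] using hφ.apply_add_add_apply_dist hab (n + 1) 1

theorem zero_zero_eq (hφ : IsChebyshevMomentFamily 2 φ) (h0 : φ ![0, 0] 0 = 1) (n : ℕ) :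
    φ ![0, 0] n = eval (φ ![0, 0] 1) (T ℂ n) := by
  refine eq_eval_T_of_add_two h0 (fun n => ?_) n
  have h := hφ.apply_add_two_add_apply (a := 0) (b := 0) (by norm_num) n
  simp only [zero_add, range_one, sum_singleton, Nat.choose_self, Nat.cast_one, one_mul] at h
  linear_combination h

theorem eq_of_add_eq_one (hφ : IsChebyshevMomentFamily 2 φ) (h0 : φ ![0, 0] 0 = 1) {a b : ℕ}
    (hab : a + b = 1) (n : ℕ) :
    φ ![a, b] n = φ ![a, b] 1 * eval (φ ![0, 0] 1) (derivative (T ℂ n)) := by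
  have hzero := hφ.apply_zero_eq_sum (a := a) (b := b) (by omega)
  have hrec := hφ.apply_add_two_add_apply (a := a) (b := b) (by omega)
  obtain ⟨rfl, rfl⟩ | ⟨rfl, rfl⟩ : a = 1 ∧ b = 0 ∨ a = 0 ∧ b = 1 := by omega
  all_goals
    refine eq_mul_eval_derivative_T_of_add_two _ (by simpa [sum_range_succ, h0] using hzero)
      (fun n => ?_) n
    have h := hrec n
    simp [sum_range_succ, hφ.zero_zero_eq h0 (n + 1)] at h
    linear_combination h

theorem eq_of_add_eq_two (hφ : IsChebyshevMomentFamily 2 φ) (h0 : φ ![0, 0] 0 = 1) {a b : ℕ}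
    (hab : a + b = 2) (n : ℕ) :
    φ ![a, b] n = φ ![1, 0] 1 ^ a * φ ![0, 1] 1 ^ b *
        eval (φ ![0, 0] 1) (derivative (derivative (T ℂ n))) +
      φ ![a, b] 1 * eval (φ ![0, 0] 1) (derivative (T ℂ n)) := by
  have hzero := hφ.apply_zero_eq_sum (a := a) (b := b) (by omega)
  have hrec := hφ.apply_add_two_add_apply (a := a) (b := b) (by omega)
  have h10 := hφ.eq_of_add_eq_one h0 (a := 1) (b := 0) rfl
  have h01 := hφ.eq_of_add_eq_one h0 (a := 0) (b := 1) rfl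
  have z10 : φ ![1, 0] 0 = 0 := by simpa using h10 0
  have z01 : φ ![0, 1] 0 = 0 := by simpa using h01 0
  obtain ⟨rfl, rfl⟩ | ⟨rfl, rfl⟩ | ⟨rfl, rfl⟩ :
      a = 2 ∧ b = 0 ∨ a = 1 ∧ b = 1 ∨ a = 0 ∧ b = 2 := by omega
  all_goals
    refine eq_eval_derivative_T_of_add_two _ _
      (by simpa [sum_range_succ, h0, z10, z01] using hzero) (fun n => ?_) n
    have h := hrec n
    simp [sum_range_succ, hφ.zero_zero_eq h0 (n + 1), h10 (n + 1), h01 (n + 1)] at h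
    linear_combination h

end IsChebyshevMomentFamily

theorem chebyshev_moment_rank_two
    (φ : (Fin 2 → ℕ) → ℕ → ℂ)
    (h0 : φ ![0, 0] 0 = 1)
    (hmom : ∀ α : Fin 2 → ℕ, (∑ i, α i) ≤ 2 → ∀ m n : ℕ,
      (1 / 2 : ℂ) * φ α (m + n) + (1 / 2 : ℂ) * φ α (Nat.dist m n) =
        ∑ β ∈ Finset.Iic α, (mchoose α β : ℂ) * φ β m * φ (α - β) n) :
    ∀ n : ℕ,
      φ ![0, 0] n = Polynomial.aeval (φ ![0, 0] 1) (T ℂ n) ∧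
      φ ![1, 0] n = φ ![1, 0] 1 * Polynomial.aeval (φ ![0, 0] 1) (derivative (T ℂ n)) ∧
      φ ![0, 1] n = φ ![0, 1] 1 * Polynomial.aeval (φ ![0, 0] 1) (derivative (T ℂ n)) ∧
      φ ![1, 1] n = φ ![1, 0] 1 * φ ![0, 1] 1 *
          Polynomial.aeval (φ ![0, 0] 1) (derivative (derivative (T ℂ n))) +
        φ ![1, 1] 1 * Polynomial.aeval (φ ![0, 0] 1) (derivative (T ℂ n)) ∧
      φ ![2, 0] n = (φ ![1, 0] 1) ^ 2 *
          Polynomial.aeval (φ ![0, 0] 1) (derivative (derivative (T ℂ n))) +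
        φ ![2, 0] 1 * Polynomial.aeval (φ ![0, 0] 1) (derivative (T ℂ n)) ∧
      φ ![0, 2] n = (φ ![0, 1] 1) ^ 2 *
          Polynomial.aeval (φ ![0, 0] 1) (derivative (derivative (T ℂ n))) +
        φ ![0, 2] 1 * Polynomial.aeval (φ ![0, 0] 1) (derivative (T ℂ n)) := by
  have hφ : IsChebyshevMomentFamily 2 φ := hmom
  intro n
  simp only [coe_aeval_eq_eval]
  refine ⟨hφ.zero_zero_eq h0 n, hφ.eq_of_add_eq_one h0 rfl n, hφ.eq_of_add_eq_one h0 rfl n,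
    ?_, ?_, ?_⟩
  · simpa using hφ.eq_of_add_eq_two h0 (a := 1) (b := 1) rfl n
  · simpa using hφ.eq_of_add_eq_two h0 (a := 2) (b := 0) rfl n
  · simpa using hφ.eq_of_add_eq_two h0 (a := 0) (b := 2) rfl n
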